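/- arXiv:math/0509023 — 2 statements merged into one kernel-verified Lean document; each statement's English description precedes it below -/
import Mathlib

section
/- Let a_1, a_2 ∈ ℝ be linearly independent over ℚ and set a = (a_1, a_2). Then a is transcendental (not F-algebraic for any real algebraic number field F of degree 2) if and only if M(a) = {1, −1}. -/
open Matrix

/-- The multiplier set of a frequency vector `a`: the set of real numbers `α`
such that some integer matrix `B` of determinant `±1` satisfies `B · a = α • a`. -/
def MultSet {n : ℕ} (a : Fin n → ℝ) : Set ℝ :=
  {α : ℝ | ∃ B : Matrix (Fin n) (Fin n) ℤ,
    (B.det = 1 ∨ B.det = -1) ∧ ∀ i, α * a i = ∑ j, (B i j : ℝ) * a j}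

/-- `a` is `F`-algebraic: for some nonzero `θ`, the numbers `θ * a i` lie in `F`
and form a `ℚ`-basis of `F`. -/
def IsFAlgebraic {n : ℕ} (F : Subfield ℝ) (a : Fin n → ℝ) : Prop :=
  ∃ θ : ℝ, θ ≠ 0 ∧ ∃ bas : Module.Basis (Fin n) ℚ F, ∀ i, (bas i : ℝ) = θ * a i

/-- `MultSet a` is a finite-index subgroup of the unit group of the ring of
integers of `F`: every multiplier is a unit of `𝓞_F`, and finitely many units
`u i` suffice so that every unit of `𝓞_F` is some `u i` times a multiplier. -/
def MultSetFiniteIndexUnits {n : ℕ} (a : Fin n → ℝ) (F : Subfield ℝ) : Prop :=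
  (∀ α ∈ MultSet a, ∃ u : (integralClosure ℤ F)ˣ,
      (((u : integralClosure ℤ F) : F) : ℝ) = α) ∧
  ∃ m : ℕ, ∃ u : Fin m → (integralClosure ℤ F)ˣ,
    ∀ v : (integralClosure ℤ F)ˣ, ∃ i : Fin m, ∃ α ∈ MultSet a,
      (((v : integralClosure ℤ F) : F) : ℝ)
        = (((u i : integralClosure ℤ F) : F) : ℝ) * α


/-!
Both sides are invariant under scaling `a`, so we may take `a = (1, β)` with `β = a₂ / a₁`
irrational. An integer matrix `B` with `B (1, β) = α (1, β)` gives `α = B₀₀ + B₀₁ β` and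
`α β = B₁₀ + B₁₁ β`; if `B₀₁ ≠ 0` this is an integral quadratic equation for `β`, and otherwise
`B = ±1`. Conversely, if `a β² = b β + c`, then `δ = 2aβ - b` is a square root of the
non-square integer `D = b² + 4ac`, and a nontrivial solution of Pell's equation `u² - D v² = 1`
gives a multiplier `u + v δ ≠ ±1`. Finally, `(1, β)` is `F`-algebraic for a quadratic field `F`
exactly when `β` is quadratic, with `F = ℚ(β)`.
-/

open Polynomial IntermediateField

def IsQuadratic (β : ℝ) : Prop :=
  ∃ a b c : ℤ, a ≠ 0 ∧ a * β ^ 2 = b * β + c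

lemma isQuadratic_of_rat {β : ℝ} (r s : ℚ) (h : β ^ 2 = r * β + s) : IsQuadratic β := by
  refine ⟨r.den * s.den, r.num * s.den, s.num * r.den, by positivity, ?_⟩
  have hr : (r : ℝ) * r.den = r.num := by exact_mod_cast Rat.mul_den_eq_num r
  have hs : (s : ℝ) * s.den = s.num := by exact_mod_cast Rat.mul_den_eq_num s
  push_cast
  linear_combination (r.den * s.den : ℝ) * h + (s.den * β : ℝ) * hr + (r.den : ℝ) * hs

lemma IsQuadratic.exists_natDegree_eq_two {β : ℝ} (hq : IsQuadratic β) :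
    ∃ p : ℚ[X], p.natDegree = 2 ∧ aeval β p = 0 := by
  obtain ⟨a, b, c, ha, h⟩ := hq
  refine ⟨C (a : ℚ) * X ^ 2 - C (b : ℚ) * X - C (c : ℚ), by compute_degree!, ?_⟩
  simp only [map_sub, map_mul, aeval_C, aeval_X, map_pow, eq_ratCast, Rat.cast_intCast]
  linear_combination h

lemma IsQuadratic.isIntegral {β : ℝ} (hq : IsQuadratic β) : IsIntegral ℚ β := by
  obtain ⟨p, hp, hpβ⟩ := hq.exists_natDegree_eq_two
  exact isAlgebraic_iff_isIntegral.1 ⟨p, ne_zero_of_natDegree_gt (n := 0) (by omega), hpβ⟩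

lemma IsQuadratic.natDegree_minpoly {β : ℝ} (hβ : Irrational β) (hq : IsQuadratic β) :
    (minpoly ℚ β).natDegree = 2 := by
  obtain ⟨p, hp, hpβ⟩ := hq.exists_natDegree_eq_two
  refine le_antisymm ?_ ((minpoly.two_le_natDegree_iff hq.isIntegral).2 ?_)
  · rw [← hp]
    exact natDegree_le_natDegree (minpoly.degree_le_of_ne_zero ℚ β
      (ne_zero_of_natDegree_gt (n := 0) (by omega)) hpβ)
  · rintro ⟨q, rfl⟩
    exact hβ ⟨q, rfl⟩

lemma irrational_div_of_linearIndependent {x y : ℝ} (h : LinearIndependent ℚ ![x, y]) :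
    Irrational (y / x) := by
  rintro ⟨q, hq⟩
  have hx : x ≠ 0 := by simpa using h.ne_zero 0
  have := (LinearIndependent.pair_iff.1 h q (-1) (by
    rw [Rat.smul_def, hq, div_mul_cancel₀ y hx]; simp)).2
  norm_num at this

section Scaling

variable {n : ℕ} {c : ℝ}

lemma multSet_smul (hc : c ≠ 0) (a : Fin n → ℝ) : MultSet (c • a) = MultSet a := by
  ext α
  simp only [MultSet, Set.mem_ofPred_eq, Pi.smul_apply, smul_eq_mul, mul_left_comm _ c,
    ← Finset.mul_sum, mul_right_inj' hc]

lemma isFAlgebraic_smul {F : Subfield ℝ} (hc : c ≠ 0) (a : Fin n → ℝ) :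
    IsFAlgebraic F (c • a) ↔ IsFAlgebraic F a := by
  constructor
  · rintro ⟨θ, hθ, bas, hbas⟩
    exact ⟨θ * c, mul_ne_zero hθ hc, bas, fun i => by rw [hbas, Pi.smul_apply, smul_eq_mul]; ring⟩
  · rintro ⟨θ, hθ, bas, hbas⟩
    exact ⟨θ / c, div_ne_zero hθ hc, bas, fun i => by
      rw [hbas, Pi.smul_apply, smul_eq_mul]; field_simp⟩

end Scaling

lemma IsFAlgebraic.isQuadratic {F : Subfield ℝ} {β : ℝ} (h : IsFAlgebraic F ![1, β]) :
    IsQuadratic β := by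
  obtain ⟨θ, hθ, bas, hbas⟩ := h
  have hb0 : (bas 0 : ℝ) = θ := by simpa using hbas 0
  have hb1 : (bas 1 : ℝ) = θ * β := by simpa using hbas 1
  -- `θ β² = (θ β)² / θ` lies in `F`, so it is a rational combination of `θ` and `θ β`.
  set x := bas 1 * bas 1 / bas 0
  have hrepr := congrArg ((↑) : F → ℝ) (bas.sum_repr x)
  simp only [x, Fin.sum_univ_two, Subfield.coe_add, Rat.smul_def, Subfield.coe_mul,
    Subfield.coe_div, SubfieldClass.coe_ratCast, hb0, hb1] at hrepr
  rw [show θ * β * (θ * β) / θ = θ * β ^ 2 by field_simp] at hrepr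
  refine isQuadratic_of_rat (bas.repr x 1) (bas.repr x 0) (mul_left_cancel₀ hθ ?_)
  linear_combination -hrepr

lemma exists_isFAlgebraic_of_isQuadratic {β : ℝ} (hβ : Irrational β) (hq : IsQuadratic β) :
    ∃ F : Subfield ℝ, Module.finrank ℚ F = 2 ∧ IsFAlgebraic F ![1, β] := by
  set pb := adjoin.powerBasis hq.isIntegral
  have hdim : pb.dim = 2 := hq.natDegree_minpoly hβ
  refine ⟨ℚ⟮β⟯.toSubfield, (adjoin.finrank hq.isIntegral).trans hdim, 1, one_ne_zero,
    pb.basis.reindex (finCongr hdim), fun i => ?_⟩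
  have hbasis : ((pb.basis.reindex (finCongr hdim) i : ℚ⟮β⟯) : ℝ) = β ^ (i : ℕ) := by
    rw [Module.Basis.reindex_apply, PowerBasis.coe_basis]
    simp [pb]
  rw [hbasis]
  fin_cases i <;> simp

lemma exists_isFAlgebraic_iff_isQuadratic {β : ℝ} (hβ : Irrational β) :
    (∃ F : Subfield ℝ, Module.finrank ℚ F = 2 ∧ IsFAlgebraic F ![1, β]) ↔ IsQuadratic β :=
  ⟨fun ⟨_, _, hF⟩ => hF.isQuadratic, exists_isFAlgebraic_of_isQuadratic hβ⟩

lemma one_mem_multSet {n : ℕ} (a : Fin n → ℝ) : 1 ∈ MultSet a :=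
  ⟨1, Or.inl det_one, fun i => by simp [Matrix.one_apply]⟩

lemma neg_one_mem_multSet {n : ℕ} (a : Fin n → ℝ) : -1 ∈ MultSet a :=
  ⟨-1, by simpa [det_neg] using neg_one_pow_eq_or ℤ n, fun i => by simp [Matrix.one_apply]⟩

lemma mem_multSet_one_pair_iff {α β : ℝ} :
    α ∈ MultSet ![1, β] ↔ ∃ B : Matrix (Fin 2) (Fin 2) ℤ, (B.det = 1 ∨ B.det = -1) ∧
      α = B 0 0 + B 0 1 * β ∧ α * β = B 1 0 + B 1 1 * β := by
  simp [MultSet, Fin.forall_fin_two, Fin.sum_univ_two]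

lemma eq_one_or_eq_neg_one_of_mem_multSet {α β : ℝ} (hβ : Irrational β) (hq : ¬ IsQuadratic β)
    (hα : α ∈ MultSet ![1, β]) : α = 1 ∨ α = -1 := by
  obtain ⟨B, hdet, h0, h1⟩ := mem_multSet_one_pair_iff.1 hα
  have hB01 : B 0 1 = 0 := by
    by_contra hB01
    exact hq ⟨B 0 1, B 1 1 - B 0 0, B 1 0, hB01, by push_cast; linear_combination h1 - β * h0⟩
  rw [hB01, Int.cast_zero, zero_mul, add_zero] at h0
  have hB11 : B 1 1 = B 0 0 := by
    by_contra hne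
    refine (hβ.intCast_mul (sub_ne_zero.2 hne)).ne_int (-B 1 0) ?_
    push_cast
    linear_combination β * h0 - h1
  rw [det_fin_two, hB01, hB11, zero_mul, sub_zero] at hdet
  rw [h0]
  rcases hdet with h | h
  · rcases mul_self_eq_one_iff.1 h with h | h <;> simp [h]
  · nlinarith [mul_self_nonneg (B 0 0)]

lemma exists_mem_multSet_ne_one_ne_neg_one {β : ℝ} (hβ : Irrational β) (hq : IsQuadratic β) :
    ∃ α ∈ MultSet ![1, β], α ≠ 1 ∧ α ≠ -1 := by
  obtain ⟨a, b, c, ha, h⟩ := hq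
  have h2a : 2 * a ≠ 0 := mul_ne_zero two_ne_zero ha
  have hδ : ((2 * a : ℤ) * β - b) ^ 2 = ((b ^ 2 + 4 * a * c : ℤ) : ℝ) := by
    push_cast
    linear_combination 4 * (a : ℝ) * h
  set D := b ^ 2 + 4 * a * c
  have hδirr : Irrational ((2 * a : ℤ) * β - b) := (hβ.intCast_mul h2a).sub_intCast b
  have hD : ¬ IsSquare D := by
    rintro ⟨k, hk⟩
    rw [hk, ← sq, Int.cast_pow] at hδ
    rcases sq_eq_sq_iff_eq_or_eq_neg.1 hδ with hδ | hδ
    · exact hδirr.ne_int k hδ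
    · exact hδirr.ne_int (-k) (by exact_mod_cast hδ)
  have hDpos : 0 < D := by
    refine lt_of_le_of_ne ?_ fun h0 => hD ⟨0, by rw [← h0]; rfl⟩
    exact_mod_cast hδ ▸ sq_nonneg _
  obtain ⟨u, v, huv, hv⟩ := Pell.exists_of_not_isSquare hDpos hD
  -- multiplication by `u + v δ` in the basis `(1, β)`
  have hirr : Irrational ((u - v * b : ℤ) + (2 * a * v : ℤ) * β) :=
    (hβ.intCast_mul (mul_ne_zero h2a hv)).intCast_add _
  refine ⟨_, mem_multSet_one_pair_iff.2 ⟨!![u - v * b, 2 * a * v; 2 * c * v, u + v * b],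
    Or.inl ?_, by simp, ?_⟩, hirr.ne_one, by exact_mod_cast hirr.ne_int (-1)⟩
  · rw [det_fin_two_of]
    linear_combination huv
  · simp only [of_apply, cons_val', cons_val_zero, cons_val_one, empty_val', cons_val_fin_one]
    push_cast
    linear_combination 2 * (v : ℝ) * h

lemma multSet_eq_iff_not_isQuadratic {β : ℝ} (hβ : Irrational β) :
    MultSet ![1, β] = {1, -1} ↔ ¬ IsQuadratic β := by
  constructor
  · intro hM hq
    obtain ⟨α, hα, hα1, hα2⟩ := exists_mem_multSet_ne_one_ne_neg_one hβ hq
    rw [hM] at hα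
    exact hα.elim hα1 hα2
  · intro hq
    ext α
    refine ⟨eq_one_or_eq_neg_one_of_mem_multSet hβ hq, ?_⟩
    rintro (rfl | rfl)
    exacts [one_mem_multSet _, neg_one_mem_multSet _]

/-- on `T²`, transcendentality is equivalent to the multiplier
set being exactly `{1, -1}`. -/
theorem transcendental_iff_multSet_pm_one (a₁ a₂ : ℝ)
    (ha : LinearIndependent ℚ ![a₁, a₂]) :
    (∀ F : Subfield ℝ, Module.finrank ℚ F = 2 → ¬ IsFAlgebraic F ![a₁, a₂]) ↔
      MultSet ![a₁, a₂] = {1, -1} := by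
  have ha₁ : a₁ ≠ 0 := by simpa using ha.ne_zero 0
  have hβ := irrational_div_of_linearIndependent ha
  have hscale : ![a₁, a₂] = a₁ • ![1, a₂ / a₁] := by
    ext i
    fin_cases i <;> simp [mul_div_cancel₀ _ ha₁]
  rw [hscale, multSet_smul ha₁, multSet_eq_iff_not_isQuadratic hβ,
    ← exists_isFAlgebraic_iff_isQuadratic hβ]
  simp only [isFAlgebraic_smul ha₁, not_exists, not_and]
end

section
/- Let n ≥ 2, let a = (a_1, …, a_n) ∈ ℝ^n have components linearly independent over ℚ, let F be a real algebraic number field of degree n, and suppose a is F-algebraic. Let C be an n×n integer matrix with nonzero determinant and define d = (d_1, …, d_n) by d_i = Σ_{j=1}^n C_{ij}·a_j. If M(d) ⊆ M(a), then the components of d are linearly independent over ℚ, d is F-algebraic, and M(d) has finite index in M(a): there exist finitely many elements s_1, …, s_m ∈ M(a) such that every α ∈ M(a) equals s_i·β for some i and some β ∈ M(d). -/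
open Matrix

/-!
If `B` and `B₀` are unimodular integer matrices with eigenvector `a` (eigenvalues `α`, `α₀`)
and `B ≡ B₀ (mod det C)`, then `B₀⁻¹ B = 1 + det C • K`, so `C B₀⁻¹ B C⁻¹ = 1 + C K adj C` is again
a unimodular integer matrix, now with eigenvector `d = C a` and eigenvalue `α₀⁻¹ α`. Since there
are only finitely many residues of integer matrices modulo `det C`, one representative `α₀` per
residue class gives the finitely many cosets of `M(d)` covering `M(a)`. `F`-algebraicity passes from `a` to `d` because the
rows of the invertible matrix `C` turn a `ℚ`-basis of `F` into another one.
-/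

theorem exists_fin_representatives {X L : Type*} [Finite L] (p : X → Prop) (f : X → L) :
    ∃ m, ∃ r : Fin m → X, (∀ i, p (r i)) ∧ ∀ x, p x → ∃ i, f (r i) = f x := by
  obtain ⟨m, ⟨e⟩⟩ := Finite.exists_equiv_fin (f '' {x | p x})
  choose g hg using fun l : f '' {x | p x} => l.2
  refine ⟨m, fun i => g (e.symm i), fun i => (hg _).1, fun x hx => ⟨e ⟨f x, x, hx, rfl⟩, ?_⟩⟩
  simp [(hg _).2]

namespace Matrix

theorem exists_eq_add_smul_of_map_intCast_eq {ι : Type*} {m : ℤ} {B B₀ : Matrix ι ι ℤ}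
    (h : B.map (Int.cast : ℤ → ZMod m.natAbs) = B₀.map Int.cast) : ∃ K, B = B₀ + m • K := by
  have hdvd : ∀ i j, m ∣ B i j - B₀ i j := fun i j =>
    Int.natAbs_dvd.mp <| (ZMod.intCast_eq_intCast_iff_dvd_sub _ _ _).mp (congrFun₂ h i j).symm
  choose K hK using hdvd
  exact ⟨of K, by ext i j; simp [← hK]⟩

variable {ι R : Type*} [Fintype ι] [DecidableEq ι] [CommRing R]

theorem mul_det_smul_eq (C M : Matrix ι ι R) : C * (C.det • M) = (C * M * C.adjugate) * C := by
  rw [mul_assoc (C * M), adjugate_mul, Matrix.mul_smul, Matrix.mul_smul, mul_one]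

theorem smul_inv_map_mulVec {B : Matrix ι ι ℤ} (hB : IsUnit B.det) {a : ι → R} {α : R}
    (h : B.map (Int.castRingHom R) *ᵥ a = α • a) :
    α • (B⁻¹.map (Int.castRingHom R) *ᵥ a) = a := by
  rw [← mulVec_smul, ← h, mulVec_mulVec, ← Matrix.map_mul, nonsing_inv_mul _ hB, Matrix.map_one]
  all_goals simp

end Matrix

section Multipliers

variable {n : ℕ} {a : Fin n → ℝ} {α : ℝ}

theorem mem_multSet_iff :
    α ∈ MultSet a ↔ ∃ B : Matrix (Fin n) (Fin n) ℤ,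
      IsUnit B.det ∧ B.map (Int.castRingHom ℝ) *ᵥ a = α • a := by
  simp only [MultSet, Set.mem_ofPred_eq, Int.isUnit_iff, funext_iff, mulVec, dotProduct,
    map_apply, eq_intCast, Pi.smul_apply, smul_eq_mul, eq_comm (a := ∑ _, _)]

theorem ne_zero_of_mem_multSet (ha : a ≠ 0) (hα : α ∈ MultSet a) : α ≠ 0 := by
  obtain ⟨B, hB, hBa⟩ := mem_multSet_iff.mp hα
  rintro rfl
  exact ha (by simpa using (smul_inv_map_mulVec hB hBa).symm)

theorem inv_mul_mem_multSet_mulVec {C B B₀ K : Matrix (Fin n) (Fin n) ℤ} (hC : C.det ≠ 0)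
    {α₀ : ℝ} (hα₀ : α₀ ≠ 0) (hB : IsUnit B.det) (hB₀ : IsUnit B₀.det)
    (hBa : B.map (Int.castRingHom ℝ) *ᵥ a = α • a) (hB₀a : B₀.map (Int.castRingHom ℝ) *ᵥ a = α₀ • a)
    (hK : B = B₀ + C.det • K) :
    α₀⁻¹ * α ∈ MultSet (C.map (Int.castRingHom ℝ) *ᵥ a) := by
  set f := Int.castRingHom ℝ
  have hUB : B₀⁻¹ * B = 1 + C.det • (B₀⁻¹ * K) := by
    rw [hK, mul_add, nonsing_inv_mul _ hB₀, Matrix.mul_smul]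
  set Bd := 1 + C * (B₀⁻¹ * K) * C.adjugate
  have hconj : C * (B₀⁻¹ * B) = Bd * C := by
    rw [hUB, mul_add, mul_one, mul_det_smul_eq, add_mul, one_mul]
  have hBd : IsUnit Bd.det := by
    have hdet := congrArg det hconj
    simp only [det_mul, mul_comm Bd.det] at hdet
    rw [← mul_left_cancel₀ hC hdet]
    exact (isUnit_nonsing_inv_det _ hB₀).mul hB
  have hUa : B₀⁻¹.map f *ᵥ a = α₀⁻¹ • a :=
    (eq_inv_smul_iff₀ hα₀).mpr (smul_inv_map_mulVec hB₀ hB₀a)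
  refine mem_multSet_iff.mpr ⟨Bd, hBd, ?_⟩
  calc Bd.map f *ᵥ (C.map f *ᵥ a) = C.map f *ᵥ (B₀⁻¹.map f *ᵥ (B.map f *ᵥ a)) := by
        simp only [mulVec_mulVec, ← Matrix.map_mul, hconj]
    _ = (α₀⁻¹ * α) • (C.map f *ᵥ a) := by
        rw [hBa, mulVec_smul, hUa, mulVec_smul, mulVec_smul, smul_smul, mul_comm]

end Multipliers

namespace IsFAlgebraic

variable {n : ℕ} {F : Subfield ℝ} {a : Fin n → ℝ}

theorem linearIndependent (h : IsFAlgebraic F a) : LinearIndependent ℚ a := by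
  obtain ⟨θ, -, bas, hbas⟩ := h
  have hθa : LinearIndependent ℚ (fun i => θ * a i) := by
    simpa [Function.comp_def, hbas] using
      bas.linearIndependent.map' F.subtype.toRatAlgHom.toLinearMap
        (LinearMap.ker_eq_bot.mpr Subtype.val_injective)
  exact hθa.of_comp (LinearMap.mulLeft ℚ θ)

theorem ne_zero (h : IsFAlgebraic F a) : a ≠ 0 := by
  obtain ⟨θ, -, bas, hbas⟩ := h
  obtain ⟨i⟩ := bas.index_nonempty
  rintro rfl
  exact bas.ne_zero i (Subtype.ext (by simpa using hbas i))

theorem mulVec (h : IsFAlgebraic F a) {C : Matrix (Fin n) (Fin n) ℚ} (hC : C.det ≠ 0) :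
    IsFAlgebraic F (C.map (Rat.castHom ℝ) *ᵥ a) := by
  obtain ⟨θ, hθ, bas, hbas⟩ := h
  have : Nonempty (Fin n) := bas.index_nonempty
  have hli : LinearIndependent ℚ (bas.equivFun.symm ∘ C.row) :=
    (linearIndependent_rows_of_isUnit ((isUnit_iff_isUnit_det C).mpr hC.isUnit)).map' _
      bas.equivFun.symm.ker
  refine ⟨θ, hθ, basisOfLinearIndependentOfCardEqFinrank hli (Module.finrank_eq_card_basis bas).symm,
    fun i => ?_⟩
  simp [bas.equivFun_symm_apply, hbas, Matrix.mulVec, dotProduct, Finset.mul_sum, Rat.smul_def,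
    mul_left_comm]

end IsFAlgebraic

theorem semiconjugacy_falgebraic_finiteIndex_general {n : ℕ}
    (a : Fin n → ℝ) (F : Subfield ℝ)
    (halg : IsFAlgebraic F a)
    (C : Matrix (Fin n) (Fin n) ℤ) (hC : C.det ≠ 0)
    (d : Fin n → ℝ) (hd : ∀ i, d i = ∑ j, (C i j : ℝ) * a j) :
    LinearIndependent ℚ d ∧ IsFAlgebraic F d ∧
    ∃ m : ℕ, ∃ s : Fin m → ℝ, (∀ i, s i ∈ MultSet a) ∧
      ∀ α ∈ MultSet a, ∃ i : Fin m, ∃ β ∈ MultSet d, α = s i * β := by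
  have hCd : d = C.map (Int.castRingHom ℝ) *ᵥ a := funext fun i => by simp [hd, mulVec, dotProduct]
  have halgd : IsFAlgebraic F d := by
    have hCℚ : (C.map (Int.cast : ℤ → ℚ)).det ≠ 0 := by rw [← Int.cast_det]; exact_mod_cast hC
    convert halg.mulVec hCℚ
    rw [hCd, map_map]
    rfl
  refine ⟨halgd.linearIndependent, halgd, ?_⟩
  have : NeZero C.det.natAbs := ⟨Int.natAbs_ne_zero.mpr hC⟩
  obtain ⟨m, r, hr, hcover⟩ := exists_fin_representatives
    (fun x : ℝ × Matrix (Fin n) (Fin n) ℤ =>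
      IsUnit x.2.det ∧ x.2.map (Int.castRingHom ℝ) *ᵥ a = x.1 • a)
    (fun x => x.2.map (Int.cast : ℤ → ZMod C.det.natAbs))
  refine ⟨m, fun i => (r i).1, fun i => mem_multSet_iff.mpr ⟨_, hr i⟩, fun α hα => ?_⟩
  obtain ⟨B, hB⟩ := mem_multSet_iff.mp hα
  obtain ⟨i, hi⟩ := hcover (α, B) hB
  obtain ⟨K, hK⟩ := exists_eq_add_smul_of_map_intCast_eq hi.symm
  have hα₀ := ne_zero_of_mem_multSet halg.ne_zero (mem_multSet_iff.mpr ⟨_, hr i⟩)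
  refine ⟨i, _, hCd ▸ inv_mul_mem_multSet_mulVec hC hα₀ hB.1 (hr i).1 hB.2 (hr i).2 hK, ?_⟩
  rw [← mul_assoc, mul_inv_cancel₀ hα₀, one_mul]

/-- smooth semiconjugacy (encoded by an integer matrix `C` of
nonzero determinant, `d = C · a`) from an `F`-algebraic quasiperiodic flow,
together with `M(d) ⊆ M(a)`, makes `d` an `F`-algebraic quasiperiodic
frequency vector with `M(d)` of finite index in `M(a)`. -/
theorem semiconjugacy_falgebraic_finiteIndex {n : ℕ} (hn : 2 ≤ n)
    (a : Fin n → ℝ) (ha : LinearIndependent ℚ a) (F : Subfield ℝ)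
    (hF : Module.finrank ℚ F = n) (halg : IsFAlgebraic F a)
    (C : Matrix (Fin n) (Fin n) ℤ) (hC : C.det ≠ 0)
    (d : Fin n → ℝ) (hd : ∀ i, d i = ∑ j, (C i j : ℝ) * a j)
    (hsub : MultSet d ⊆ MultSet a) :
    LinearIndependent ℚ d ∧ IsFAlgebraic F d ∧
    ∃ m : ℕ, ∃ s : Fin m → ℝ, (∀ i, s i ∈ MultSet a) ∧
      ∀ α ∈ MultSet a, ∃ i : Fin m, ∃ β ∈ MultSet d, α = s i * β :=
  semiconjugacy_falgebraic_finiteIndex_general a F halg C hC d hd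
end
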